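/- Let n ≥ 1 and let ξ be a symmetric canonical element for the integer lattice ℤ^n of SO(2n+1), with coordinates a_1 ≥ a_2 ≥ … ≥ a_n ≥ 0. Set m_ξ^+ = 2·#{j : a_j is odd} and m_ξ^- = 2·#{j : a_j is even} + 1, and let m = min(m_ξ^+, m_ξ^-) (so that the associated inner symmetric space N_ξ is the real Grassmannian G^ℝ_m(2n+1)). If m ≤ n, then for every k with 1 ≤ k ≤ n−m+1 one has 2(a_1+⋯+a_k) ≤ 2mk, and for every k with n−m+1 < k < n one has 2(a_1+⋯+a_k) ≤ 2m(n−m+1) + (k−n+m−1)(m+n−k). In particular 2a_1 ≤ 2m, and 2(a_1+a_2) ≤ 4m if m < n while 2(a_1+a_2) ≤ 4m−2 if m = n. -/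

import Mathlib

open scoped Classical

/-- `H_i = E_1 + ⋯ + E_i` for `so(2n+1)` (1-based index `i`). -/
def Hspin (n i : ℕ) : Fin n → ℝ := fun j => if (j : ℕ) + 1 ≤ i then 1 else 0

/-- The integer lattice `ℤ^n` inside `ℝ^n` (the integer lattice of `SO(2n+1)`). -/
def IntLat (n : ℕ) : Set (Fin n → ℝ) := {v | ∀ j, ∃ m : ℤ, v j = m}

/-- The set of symmetric canonical elements for a lattice `𝔏 ⊆ ℝ^n`. -/
def SymCanonSet (n : ℕ) (𝔏 : Set (Fin n → ℝ)) (H : ℕ → Fin n → ℝ) :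
    Set (Fin n → ℝ) :=
  {ξ | ∃ c : ℕ → ℕ, ξ = ∑ i ∈ Finset.Icc 1 n, c i • H i ∧ ξ ∈ 𝔏 ∧
    ∀ c' : ℕ → ℕ, (∀ i ∈ Finset.Icc 1 n, c' i ≤ c i) →
      (∑ i ∈ Finset.Icc 1 n, c' i • H i) ∈ 𝔏 →
      (ξ - ∑ i ∈ Finset.Icc 1 n, c' i • H i) ∈ (fun v => (2 : ℝ) • v) '' 𝔏 →
      (∑ i ∈ Finset.Icc 1 n, c' i • H i) = ξ}

/-- Sum of the first `k` (1-based) coordinates of `v`. -/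
def partialSum (n : ℕ) (v : Fin n → ℝ) (k : ℕ) : ℝ :=
  ∑ j ∈ Finset.univ.filter (fun j : Fin n => (j : ℕ) + 1 ≤ k), v j

/-- Number of coordinates of `v` equal to an odd integer. -/
noncomputable def nOdd (n : ℕ) (v : Fin n → ℝ) : ℕ :=
  (Finset.univ.filter fun j : Fin n => ∃ m : ℤ, Odd m ∧ v j = m).card

/-- Number of coordinates of `v` equal to an even integer. -/
noncomputable def nEven (n : ℕ) (v : Fin n → ℝ) : ℕ :=
  (Finset.univ.filter fun j : Fin n => ∃ m : ℤ, Even m ∧ v j = m).card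

/-!
Canonicity forces every coefficient `c_i` of `ξ = ∑ c_i H_i` to be `0` or `1`: if `c_i ≥ 2`,
lowering it by two changes `ξ` by `2 H_i ∈ 2ℤ^n`. Hence the coordinates `a_j = c_j + ⋯ + c_n` drop
by at most one at each step, from `a_1` down to `a_{n+1} = 0`, so every value `1, …, a_1` occurs
among them. Counting the odd and the even values gives `a_1 ≤ m_ξ^+` and `a_1 ≤ m_ξ^-`, i.e.
`a_1 ≤ m`. As also `a_j ≤ n - j + 1`, summing `a_j ≤ min(m, n - j + 1)` gives all the estimates.
-/

open Finset

/-- For `ξ = ∑ c_i H_i`, `spinCoord n c j` is the paper's `a_{j+1}`. -/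
def spinCoord (n : ℕ) (c : ℕ → ℕ) (j : ℕ) : ℕ := ∑ i ∈ Icc (j + 1) n, c i

lemma sum_smul_Hspin_apply (n : ℕ) (c : ℕ → ℕ) (j : Fin n) :
    (∑ i ∈ Icc 1 n, c i • Hspin n i) j = spinCoord n c j := by
  have hfilter : (Icc 1 n).filter (fun i => (j : ℕ) + 1 ≤ i) = Icc ((j : ℕ) + 1) n := by
    ext i; simp only [mem_filter, mem_Icc]; omega
  simp only [Finset.sum_apply, Pi.smul_apply]
  simp only [Hspin, nsmul_eq_mul, mul_ite, mul_one, mul_zero]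
  rw [← Finset.sum_filter, hfilter, spinCoord, Nat.cast_sum]

lemma Hspin_mem_IntLat (n i : ℕ) : Hspin n i ∈ IntLat n := fun j => by
  unfold Hspin
  split_ifs
  exacts [⟨1, by simp⟩, ⟨0, by simp⟩]

lemma sum_smul_Hspin_mem_IntLat (n : ℕ) (c : ℕ → ℕ) :
    ∑ i ∈ Icc 1 n, c i • Hspin n i ∈ IntLat n := fun j =>
  ⟨spinCoord n c j, by rw [sum_smul_Hspin_apply]; norm_cast⟩

lemma exists_coeff_le_one_of_mem_SymCanonSet {n : ℕ} {ξ : Fin n → ℝ}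
    (hξ : ξ ∈ SymCanonSet n (IntLat n) (Hspin n)) :
    ∃ c : ℕ → ℕ, ξ = ∑ i ∈ Icc 1 n, c i • Hspin n i ∧ ∀ i ∈ Icc 1 n, c i ≤ 1 := by
  obtain ⟨c, rfl, -, hcanon⟩ := hξ
  refine ⟨c, rfl, fun i hi => ?_⟩
  obtain ⟨hi₁, hin⟩ := mem_Icc.mp hi
  by_contra! hci
  set c' := Function.update c i (c i - 2)
  have hc'_le : ∀ i' ∈ Icc 1 n, c' i' ≤ c i' := fun i' _ => by
    rcases eq_or_ne i' i with rfl | h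
    · simp [c']
    · simp [c', h]
  have hc : c = c' + Pi.single i 2 := by
    ext i'
    rcases eq_or_ne i' i with rfl | h
    · simp [c']; omega
    · simp [c', h]
  have hsum : ∑ i ∈ Icc 1 n, c i • Hspin n i =
      ∑ i ∈ Icc 1 n, c' i • Hspin n i + (2 : ℝ) • Hspin n i := by
    have hsingle :
        ∑ i' ∈ Icc 1 n, (Pi.single i 2 : ℕ → ℕ) i' • Hspin n i' = (2 : ℝ) • Hspin n i := by
      rw [sum_eq_single_of_mem i hi fun i' _ h => by simp [h], Pi.single_eq_same, two_nsmul,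
        two_smul]
    conv_lhs => rw [hc]
    simp only [Pi.add_apply, add_smul, Finset.sum_add_distrib, hsingle]
  have hdiff : (∑ i ∈ Icc 1 n, c i • Hspin n i) - ∑ i ∈ Icc 1 n, c' i • Hspin n i ∈
      (fun v => (2 : ℝ) • v) '' IntLat n :=
    ⟨Hspin n i, Hspin_mem_IntLat n i, by rw [hsum, add_sub_cancel_left]⟩
  have h2H : (2 : ℝ) • Hspin n i = 0 := by
    have := hcanon c' hc'_le (sum_smul_Hspin_mem_IntLat n c') hdiff
    rwa [hsum, left_eq_add] at this
  have := congrFun h2H ⟨0, by omega⟩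
  simp [Hspin, hi₁] at this

section spinCoord

variable {n : ℕ} {c : ℕ → ℕ}

lemma spinCoord_of_le {j : ℕ} (hj : n ≤ j) : spinCoord n c j = 0 := by
  rw [spinCoord, Icc_eq_empty (by omega), sum_empty]

lemma spinCoord_antitone : Antitone (spinCoord n c) := fun _ _ h =>
  Finset.sum_le_sum_of_subset (Icc_subset_Icc (by omega) le_rfl)

variable (hc : ∀ i ∈ Icc 1 n, c i ≤ 1)
include hc

lemma spinCoord_le_succ_add_one (j : ℕ) : spinCoord n c j ≤ spinCoord n c (j + 1) + 1 := by
  rcases le_or_gt n j with hj | hj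
  · simp [spinCoord_of_le hj]
  · rw [spinCoord, ← insert_Icc_add_one_left_eq_Icc (by omega), sum_insert (by simp)]
    have := hc (j + 1) (by simp only [mem_Icc]; omega)
    rw [spinCoord]
    omega

lemma spinCoord_add_le {j : ℕ} (hj : j ≤ n) : spinCoord n c j + j ≤ n := by
  have : spinCoord n c j ≤ #(Icc (j + 1) n) * 1 :=
    Finset.sum_le_card_nsmul _ _ _ fun i hi => hc i (by simp only [mem_Icc] at hi ⊢; omega)
  rw [Nat.card_Icc] at this
  omega

end spinCoord

section DiscreteIVT

variable {a : ℕ → ℕ} (hstep : ∀ j, a j ≤ a (j + 1) + 1)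
include hstep

lemma exists_eq_of_le_of_le (N : ℕ) {v : ℕ} (hNv : a N ≤ v) (hv : v ≤ a 0) :
    ∃ j ≤ N, a j = v := by
  induction N with
  | zero => exact ⟨0, le_rfl, le_antisymm hNv hv⟩
  | succ N ih =>
    by_cases h : a N ≤ v
    · obtain ⟨j, hj, hjv⟩ := ih h
      exact ⟨j, by omega, hjv⟩
    · exact ⟨N + 1, le_rfl, by have := hstep N; omega⟩

variable {N : ℕ} (hN : a N = 0)
include hN

lemma exists_fin_eq_of_le {v : ℕ} (hv₁ : 1 ≤ v) (hv : v ≤ a 0) : ∃ j : Fin N, a j = v := by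
  obtain ⟨j, hj, hjv⟩ := exists_eq_of_le_of_le hstep N (by omega) hv
  exact ⟨⟨j, lt_of_le_of_ne hj (by rintro rfl; omega)⟩, hjv⟩

lemma le_two_mul_card_odd : a 0 ≤ 2 * #{j : Fin N | Odd (a j)} := by
  suffices (a 0 + 1) / 2 ≤ #{j : Fin N | Odd (a j)} by omega
  rw [← card_range ((a 0 + 1) / 2)]
  refine card_le_card_of_surjOn (fun j => a j / 2) fun r hr => ?_
  obtain ⟨j, hj⟩ := exists_fin_eq_of_le hstep hN (v := 2 * r + 1) (by omega)
    (by simp only [coe_range, Set.mem_Iio] at hr; omega)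
  exact ⟨j, by simp [hj], by simp only [hj]; omega⟩

lemma le_two_mul_card_even_add_one : a 0 ≤ 2 * #{j : Fin N | Even (a j)} + 1 := by
  suffices a 0 / 2 ≤ #{j : Fin N | Even (a j)} by omega
  rw [← card_range (a 0 / 2)]
  refine card_le_card_of_surjOn (fun j => a j / 2 - 1) fun r hr => ?_
  obtain ⟨j, hj⟩ := exists_fin_eq_of_le hstep hN (v := 2 * r + 2) (by omega)
    (by simp only [coe_range, Set.mem_Iio] at hr; omega)
  exact ⟨j, by simp [hj, parity_simps], by simp only [hj]; omega⟩

end DiscreteIVT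

lemma exists_intCast_eq_natCast_iff {x : ℕ} {P : ℤ → Prop} :
    (∃ m : ℤ, P m ∧ (x : ℝ) = m) ↔ P x :=
  ⟨fun ⟨m, hm, hxm⟩ => by rwa [← show (x : ℤ) = m by exact_mod_cast hxm] at hm,
    fun h => ⟨x, h, by simp⟩⟩

lemma nOdd_eq_card {n : ℕ} {v : Fin n → ℝ} {a : ℕ → ℕ} (hv : ∀ j, v j = a j) :
    nOdd n v = #{j : Fin n | Odd (a j)} := by
  simp only [nOdd, hv, exists_intCast_eq_natCast_iff, Int.odd_coe_nat]

lemma nEven_eq_card {n : ℕ} {v : Fin n → ℝ} {a : ℕ → ℕ} (hv : ∀ j, v j = a j) :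
    nEven n v = #{j : Fin n | Even (a j)} := by
  simp only [nEven, hv, exists_intCast_eq_natCast_iff, Int.even_coe_nat]

lemma partialSum_eq_sum_range {n : ℕ} {v : Fin n → ℝ} {f : ℕ → ℝ} (hv : ∀ j, v j = f j)
    (hf : ∀ j, n ≤ j → f j = 0) (k : ℕ) : partialSum n v k = ∑ j ∈ range k, f j := by
  have hrange : (range n).filter (· < k) = (range k).filter (· < n) := by
    ext j; simp only [mem_filter, mem_range]; omega
  unfold partialSum
  simp only [hv, Nat.add_one_le_iff]
  rw [Finset.sum_filter, Fin.sum_univ_eq_sum_range (fun j => if j < k then f j else 0),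
    ← Finset.sum_filter, hrange, Finset.sum_filter_of_ne fun j _ hj => ?_]
  by_contra h
  exact hj (hf j (not_lt.mp h))

lemma two_mul_sum_Ico_sub (N : ℝ) {p k : ℕ} (hpk : p ≤ k) :
    2 * ∑ j ∈ Ico p k, (N - j) = (k - p) * (2 * N - p - k + 1) := by
  induction k, hpk using Nat.le_induction with
  | base => simp
  | succ k hpk ih =>
    rw [sum_Ico_succ_top hpk, mul_add, ih]
    push_cast
    ring

lemma two_mul_sum_range_le {f : ℕ → ℝ} {M N : ℝ} {p k : ℕ} (hpk : p ≤ k)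
    (hM : ∀ j < p, f j ≤ M) (hN : ∀ j ∈ Ico p k, f j ≤ N - j) :
    2 * ∑ j ∈ range k, f j ≤ 2 * p * M + (k - p) * (2 * N - p - k + 1) := by
  have hhead : ∑ j ∈ range p, f j ≤ p * M := by
    simpa using Finset.sum_le_card_nsmul _ _ _ fun j hj => hM j (mem_range.mp hj)
  have htail := Finset.sum_le_sum hN
  rw [← sum_range_add_sum_Ico _ hpk, ← two_mul_sum_Ico_sub N hpk]
  linarith

theorem so_odd_symmetric_uniton_bounds_general (n : ℕ) (hn : 1 ≤ n) (ξ : Fin n → ℝ)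
    (hξ : ξ ∈ SymCanonSet n (IntLat n) (Hspin n))
    (m : ℕ) (hm : m = min (2 * nOdd n ξ) (2 * nEven n ξ + 1)) (hmn : m ≤ n) :
    (∀ k : ℕ, 1 ≤ k → k ≤ n - m + 1 →
      2 * partialSum n ξ k ≤ 2 * (m : ℝ) * k) ∧
    (∀ k : ℕ, n - m + 1 < k → k < n →
      2 * partialSum n ξ k ≤
        2 * (m : ℝ) * ((n : ℝ) - m + 1) +
          ((k : ℝ) - n + m - 1) * ((m : ℝ) + n - k)) ∧
    2 * partialSum n ξ 1 ≤ 2 * (m : ℝ) ∧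
    (m < n → 2 * partialSum n ξ 2 ≤ 4 * (m : ℝ)) ∧
    (m = n → 2 * partialSum n ξ 2 ≤ 4 * (m : ℝ) - 2) := by
  obtain ⟨c, hξc, hc⟩ := exists_coeff_le_one_of_mem_SymCanonSet hξ
  have hξa : ∀ j : Fin n, ξ j = spinCoord n c j := fun j => by rw [hξc, sum_smul_Hspin_apply]
  have hstep := spinCoord_le_succ_add_one hc
  have hlast : spinCoord n c n = 0 := spinCoord_of_le le_rfl
  have ha₀ : spinCoord n c 0 ≤ m := by
    have := le_two_mul_card_odd hstep hlast
    have := le_two_mul_card_even_add_one hstep hlast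
    rw [hm, nOdd_eq_card hξa, nEven_eq_card hξa]
    omega
  have hbound : ∀ p k : ℕ, p ≤ k → k ≤ n + 1 →
      2 * partialSum n ξ k ≤ 2 * p * m + (k - p) * (2 * n - p - k + 1) := by
    intro p k hpk hkn
    rw [partialSum_eq_sum_range (f := fun j => (spinCoord n c j : ℝ)) hξa
      fun j hj => by simp [spinCoord_of_le hj]]
    refine two_mul_sum_range_le hpk (fun j _ => ?_) fun j hj => ?_
    · exact_mod_cast (spinCoord_antitone j.zero_le).trans ha₀
    · have : spinCoord n c j + j ≤ n := spinCoord_add_le hc (by simp only [mem_Ico] at hj; omega)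
      rw [le_sub_iff_add_le]
      exact_mod_cast this
  refine ⟨fun k _ hk => ?_, fun k hk hkn => ?_, ?_, fun _ => ?_, fun hm_eq => ?_⟩
  · exact (hbound k k le_rfl (by omega)).trans_eq (by ring)
  · refine (hbound (n - m + 1) k (by omega) (by omega)).trans_eq ?_
    push_cast [Nat.cast_sub hmn]
    ring
  · exact (hbound 1 1 le_rfl (by omega)).trans_eq (by ring)
  · exact (hbound 2 2 le_rfl (by omega)).trans_eq (by ring)
  · refine (hbound 1 2 (by omega) (by omega)).trans_eq ?_
    rw [hm_eq]
    ring

/-- Uniton-number bounds for a symmetric canonical element `ξ` of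
`SO(2n+1)` associated with the real Grassmannian `G^ℝ_m(2n+1)`,
`m = min(m_ξ^+, m_ξ^-) ≤ n`, where `m_ξ^+ = 2·#{j : a_j odd}` and
`m_ξ^- = 2·#{j : a_j even} + 1`. -/
theorem so_odd_symmetric_uniton_bounds (n : ℕ) (hn : 1 ≤ n) (ξ : Fin n → ℝ)
    (hξ : ξ ∈ SymCanonSet n (IntLat n) (Hspin n))
    (hdec : ∀ j k : Fin n, j ≤ k → ξ k ≤ ξ j) (hpos : ∀ j, 0 ≤ ξ j)
    (m : ℕ) (hm : m = min (2 * nOdd n ξ) (2 * nEven n ξ + 1)) (hmn : m ≤ n) :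
    (∀ k : ℕ, 1 ≤ k → k ≤ n - m + 1 →
      2 * partialSum n ξ k ≤ 2 * (m : ℝ) * k) ∧
    (∀ k : ℕ, n - m + 1 < k → k < n →
      2 * partialSum n ξ k ≤
        2 * (m : ℝ) * ((n : ℝ) - m + 1) +
          ((k : ℝ) - n + m - 1) * ((m : ℝ) + n - k)) ∧
    2 * partialSum n ξ 1 ≤ 2 * (m : ℝ) ∧
    (m < n → 2 * partialSum n ξ 2 ≤ 4 * (m : ℝ)) ∧
    (m = n → 2 * partialSum n ξ 2 ≤ 4 * (m : ℝ) - 2) :=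
  so_odd_symmetric_uniton_bounds_general n hn ξ hξ m hm hmn
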